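/- arXiv:2108.06096 — 2 statements merged into one kernel-verified Lean document; each statement's English description precedes it below -/
import Mathlib

section
/- Let Σ ⊆ N ∪ P be a finite vocabulary, φ a shape over Σ, and G a graph. Then for every node name x ∉ N_G ∪ (Σ ∩ N), we have x ∈ ⟦φ⟧_G if and only if ⋆ ∈ ⟦φ⟧_⋆. -/
/-- SHACL path expressions over property names `PN`:
`E ::= p | p⁻ | E ∪ E | E ∘ E | E* | E?`. -/
inductive PathExpr (PN : Type) : Type where
  | prop  : PN → PathExpr PN
  | inv   : PN → PathExpr PN
  | union : PathExpr PN → PathExpr PN → PathExpr PN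
  | comp  : PathExpr PN → PathExpr PN → PathExpr PN
  | star  : PathExpr PN → PathExpr PN
  | opt   : PathExpr PN → PathExpr PN

/-- SHACL shapes over node names `NN`, shape names `SN`, property names `PN`:
`φ ::= ⊤ | s | {c} | φ∧φ | φ∨φ | ¬φ | ≥ₙE.φ | eq(p,E) | disj(p,E) | closed(Q)`. -/
inductive Shape (NN SN PN : Type) : Type where
  | top     : Shape NN SN PN
  | sname   : SN → Shape NN SN PN
  | single  : NN → Shape NN SN PN
  | sand    : Shape NN SN PN → Shape NN SN PN → Shape NN SN PN
  | sor     : Shape NN SN PN → Shape NN SN PN → Shape NN SN PN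
  | snot    : Shape NN SN PN → Shape NN SN PN
  | atLeast : ℕ → PathExpr PN → Shape NN SN PN → Shape NN SN PN
  | eqS     : PN → PathExpr PN → Shape NN SN PN
  | disjS   : PN → PathExpr PN → Shape NN SN PN
  | closed  : Finset PN → Shape NN SN PN

/-- An interpretation over a vocabulary `Σ ⊆ N ∪ S ∪ P` (the three components of
the vocabulary are recorded as `sigmaN`, `sigmaS`, `sigmaP`), with domain `Δ`:
it assigns an element of `Δ` to each node name, a subset of `Δ` to each shape
name, and a binary relation on `Δ` to each property name. -/
structure Interp (NN SN PN Δ : Type) where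
  sigmaN : Set NN
  sigmaS : Set SN
  sigmaP : Set PN
  nodeI  : NN → Δ
  shapeI : SN → Set Δ
  propI  : PN → Set (Δ × Δ)

variable {NN SN PN Δ : Type}

/-- Semantics of path expressions: binary relations on the domain. -/
def evalPath (I : Interp NN SN PN Δ) : PathExpr PN → Set (Δ × Δ)
  | .prop p => I.propI p
  | .inv p  => {x | (x.2, x.1) ∈ I.propI p}
  | .union E₁ E₂ => evalPath I E₁ ∪ evalPath I E₂
  | .comp E₁ E₂  => {x | ∃ z, (x.1, z) ∈ evalPath I E₁ ∧ (z, x.2) ∈ evalPath I E₂}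
  | .star E => {x | Relation.ReflTransGen (fun a b => (a, b) ∈ evalPath I E) x.1 x.2}
  | .opt E  => evalPath I E ∪ {x | x.1 = x.2}

/-- Semantics of shapes: subsets of the domain.  `closed Q` holds of `a` when
`a` has no outgoing `p`-edge for any property name `p` of the vocabulary
outside `Q`. -/
def evalShape (I : Interp NN SN PN Δ) : Shape NN SN PN → Set Δ
  | .top => Set.univ
  | .sname s => I.shapeI s
  | .single c => {I.nodeI c}
  | .sand φ ψ => evalShape I φ ∩ evalShape I ψ
  | .sor φ ψ  => evalShape I φ ∪ evalShape I ψ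
  | .snot φ   => (evalShape I φ)ᶜ
  | .atLeast n E φ =>
      {a | (n : ℕ∞) ≤ (evalShape I φ ∩ {b | (a, b) ∈ evalPath I E}).encard}
  | .eqS p E  => {a | {b | (a, b) ∈ I.propI p} = {b | (a, b) ∈ evalPath I E}}
  | .disjS p E => {a | {b | (a, b) ∈ I.propI p} ∩ {b | (a, b) ∈ evalPath I E} = ∅}
  | .closed Q => {a | ∀ p ∈ I.sigmaP, p ∉ Q → ∀ b, (a, b) ∉ I.propI p}

/-- A path expression is over a vocabulary whose property-name part is `VP`. -/
def PathExpr.over (VP : Set PN) : PathExpr PN → Prop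
  | .prop p => p ∈ VP
  | .inv p  => p ∈ VP
  | .union E₁ E₂ => E₁.over VP ∧ E₂.over VP
  | .comp E₁ E₂  => E₁.over VP ∧ E₂.over VP
  | .star E => E.over VP
  | .opt E  => E.over VP

/-- A shape is over the vocabulary `Σ = VN ∪ VS ∪ VP` if it uses only symbols
from `Σ`. -/
def Shape.over (VN : Set NN) (VS : Set SN) (VP : Set PN) : Shape NN SN PN → Prop
  | .top => True
  | .sname s => s ∈ VS
  | .single c => c ∈ VN
  | .sand φ ψ => φ.over VN VS VP ∧ ψ.over VN VS VP
  | .sor φ ψ  => φ.over VN VS VP ∧ ψ.over VN VS VP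
  | .snot φ   => φ.over VN VS VP
  | .atLeast _ E φ => E.over VP ∧ φ.over VN VS VP
  | .eqS p E  => p ∈ VP ∧ E.over VP
  | .disjS p E => p ∈ VP ∧ E.over VP
  | .closed Q => ↑Q ⊆ VP

/-- A graph: a finite set of facts `p(a,b)`. -/
structure RDFGraph (NN PN : Type) where
  facts : Finset (PN × NN × NN)

/-- `N_G`: the node names occurring in the graph `G`. -/
def RDFGraph.nodes [DecidableEq NN] (G : RDFGraph NN PN) : Finset NN :=
  G.facts.image (fun f => f.2.1) ∪ G.facts.image (fun f => f.2.2)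

/-- The natural interpretation `I(G)` of a graph `G`: its vocabulary is all of
`N ∪ P` (no shape names), its domain is the set `N` of ALL node names, each
node name denotes itself, and each property name `p` denotes
`{(a,b) | p(a,b) ∈ G}`. -/
def RDFGraph.natural (G : RDFGraph NN PN) (SN : Type) : Interp NN SN PN NN where
  sigmaN := Set.univ
  sigmaS := ∅
  sigmaP := Set.univ
  nodeI  := id
  shapeI := fun _ => ∅
  propI  := fun p => {x | (p, x.1, x.2) ∈ G.facts}

/-- The interpretation `I_⋆` determined by a graph `G` and a finite vocabulary
`Σ ⊆ N ∪ P` (with node part `VN` and property part `VP`): it is just like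
`I(G)` except that its domain is `N_G ∪ (Σ ∩ N) ∪ {⋆}`, where the fresh
element `⋆` is modelled by `none`. -/
def RDFGraph.starI [DecidableEq NN] (G : RDFGraph NN PN) (SN : Type)
    (VN : Finset NN) (VP : Set PN) :
    Interp NN SN PN (Option {x : NN // x ∈ G.nodes ∪ VN}) where
  sigmaN := ↑VN
  sigmaS := ∅
  sigmaP := VP
  nodeI  := fun c => if h : c ∈ G.nodes ∪ VN then some ⟨c, h⟩ else none
  shapeI := fun _ => ∅
  propI  := fun p => {x | ∃ a b, x.1 = some a ∧ x.2 = some b ∧ (p, a.1, b.1) ∈ G.facts}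


/-!
Both `x` in `I(G)` and `⋆` in `I_⋆` are isolated points: no edge enters or leaves them and no
node name of `Σ` denotes them. From an isolated point a path expression reaches the point itself
if it matches the empty path and nothing otherwise, so whether an isolated point satisfies a
shape over `Σ` does not depend on the surrounding interpretation.
-/

def PathExpr.Nullable : PathExpr PN → Prop
  | .prop _ => False
  | .inv _ => False
  | .union E₁ E₂ => E₁.Nullable ∨ E₂.Nullable
  | .comp E₁ E₂ => E₁.Nullable ∧ E₂.Nullable
  | .star _ => True
  | .opt _ => True

def Interp.Isolated (I : Interp NN SN PN Δ) (a : Δ) : Prop :=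
  ∀ p d, (a, d) ∉ I.propI p ∧ (d, a) ∉ I.propI p

namespace Interp.Isolated

variable {I : Interp NN SN PN Δ} {a : Δ}

theorem mem_evalPath_iff (ha : I.Isolated a) (E : PathExpr PN) (d : Δ) :
    (a, d) ∈ evalPath I E ↔ d = a ∧ E.Nullable := by
  induction E generalizing d with
  | prop p => simpa [evalPath, PathExpr.Nullable] using (ha p d).1
  | inv p => simpa [evalPath, PathExpr.Nullable] using (ha p d).2
  | union E₁ E₂ ih₁ ih₂ =>
    simp only [evalPath, Set.mem_union, ih₁, ih₂, PathExpr.Nullable]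
    tauto
  | comp E₁ E₂ ih₁ ih₂ =>
    simp only [evalPath, Set.mem_ofPred_eq, PathExpr.Nullable]
    constructor
    · rintro ⟨z, h₁, h₂⟩
      obtain ⟨rfl, hn₁⟩ := (ih₁ z).mp h₁
      obtain ⟨rfl, hn₂⟩ := (ih₂ d).mp h₂
      exact ⟨rfl, hn₁, hn₂⟩
    · rintro ⟨hd, hn₁, hn₂⟩
      exact ⟨a, (ih₁ a).mpr ⟨rfl, hn₁⟩, (ih₂ d).mpr ⟨hd, hn₂⟩⟩
  | star E ih =>
    simp only [evalPath, Set.mem_ofPred_eq, PathExpr.Nullable, and_true]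
    constructor
    · intro h
      induction h with
      | refl => rfl
      | tail _ hstep hz => exact ((ih _).mp (hz ▸ hstep)).1
    · rintro rfl
      exact Relation.ReflTransGen.refl
  | opt E ih =>
    simp only [evalPath, Set.mem_union, Set.mem_ofPred_eq, ih, PathExpr.Nullable, and_true]
    exact ⟨fun h => h.elim And.left Eq.symm, fun h => Or.inr h.symm⟩

theorem setOf_mem_evalPath (ha : I.Isolated a) (E : PathExpr PN) :
    {d | (a, d) ∈ evalPath I E} = {d | d = a ∧ E.Nullable} :=
  Set.ext (ha.mem_evalPath_iff E)

theorem setOf_mem_propI (ha : I.Isolated a) (p : PN) : {d | (a, d) ∈ I.propI p} = ∅ :=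
  Set.eq_empty_of_forall_notMem fun d => (ha p d).1

theorem mem_evalShape_atLeast_iff (ha : I.Isolated a) (n : ℕ) (E : PathExpr PN)
    (ψ : Shape NN SN PN) :
    a ∈ evalShape I (.atLeast n E ψ) ↔ n = 0 ∨ n = 1 ∧ a ∈ evalShape I ψ ∧ E.Nullable := by
  have hsucc : evalShape I ψ ∩ {d | (a, d) ∈ evalPath I E} =
      {d | d = a ∧ a ∈ evalShape I ψ ∧ E.Nullable} := by
    ext d
    rw [Set.mem_inter_iff, Set.mem_ofPred_eq, ha.mem_evalPath_iff, Set.mem_ofPred_eq]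
    exact ⟨fun ⟨hd, he, hn⟩ => ⟨he, he ▸ hd, hn⟩, fun ⟨he, hd, hn⟩ => ⟨he ▸ hd, he, hn⟩⟩
  simp only [evalShape, Set.mem_ofPred_eq, hsucc]
  by_cases hP : a ∈ evalShape I ψ ∧ E.Nullable
  · simp only [hP, and_true, Set.ofPred_eq_eq_singleton, Set.encard_singleton]
    constructor
    · intro hn
      have : n ≤ 1 := by exact_mod_cast hn
      omega
    · rintro (rfl | rfl) <;> simp
  · simp [hP]

theorem mem_evalShape_eqS_iff (ha : I.Isolated a) (p : PN) (E : PathExpr PN) :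
    a ∈ evalShape I (.eqS p E) ↔ ¬E.Nullable := by
  change {d | (a, d) ∈ I.propI p} = {d | (a, d) ∈ evalPath I E} ↔ _
  rw [ha.setOf_mem_propI, ha.setOf_mem_evalPath, eq_comm, Set.eq_empty_iff_forall_notMem]
  exact ⟨fun h hn => h a ⟨rfl, hn⟩, fun h d hd => h hd.2⟩

theorem mem_evalShape_disjS (ha : I.Isolated a) (p : PN) (E : PathExpr PN) :
    a ∈ evalShape I (.disjS p E) := by
  simp [evalShape, ha.setOf_mem_propI]

theorem mem_evalShape_closed (ha : I.Isolated a) (Q : Finset PN) :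
    a ∈ evalShape I (.closed Q) :=
  fun p _ _ d => (ha p d).1

theorem mem_evalShape_iff {Δ' : Type} {J : Interp NN SN PN Δ'} {b : Δ'} (ha : I.Isolated a) (hb : J.Isolated b)
    {VN : Set NN} {VS : Set SN} {VP : Set PN}
    (haN : ∀ c ∈ VN, I.nodeI c ≠ a) (hbN : ∀ c ∈ VN, J.nodeI c ≠ b)
    (hS : ∀ s ∈ VS, a ∈ I.shapeI s ↔ b ∈ J.shapeI s)
    (φ : Shape NN SN PN) (hφ : φ.over VN VS VP) :
    a ∈ evalShape I φ ↔ b ∈ evalShape J φ := by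
  induction φ with
  | top => simp [evalShape]
  | sname s => exact hS s hφ
  | single c =>
    exact iff_of_false (fun h => haN c hφ h.symm) (fun h => hbN c hφ h.symm)
  | sand φ ψ ihφ ihψ => exact and_congr (ihφ hφ.1) (ihψ hφ.2)
  | sor φ ψ ihφ ihψ => exact or_congr (ihφ hφ.1) (ihψ hφ.2)
  | snot φ ih => exact not_congr (ih hφ)
  | atLeast n E ψ ih =>
    rw [ha.mem_evalShape_atLeast_iff, hb.mem_evalShape_atLeast_iff, ih hφ.2]
  | eqS p E => rw [ha.mem_evalShape_eqS_iff, hb.mem_evalShape_eqS_iff]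
  | disjS p E => exact iff_of_true (ha.mem_evalShape_disjS p E) (hb.mem_evalShape_disjS p E)
  | closed Q => exact iff_of_true (ha.mem_evalShape_closed Q) (hb.mem_evalShape_closed Q)

end Interp.Isolated

namespace RDFGraph

variable [DecidableEq NN]

theorem mem_nodes_of_mem_facts {G : RDFGraph NN PN} {p : PN} {a b : NN}
    (h : (p, a, b) ∈ G.facts) : a ∈ G.nodes ∧ b ∈ G.nodes := by
  simp only [RDFGraph.nodes, Finset.mem_union, Finset.mem_image]
  exact ⟨Or.inl ⟨(p, a, b), h, rfl⟩, Or.inr ⟨(p, a, b), h, rfl⟩⟩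

theorem isolated_natural (G : RDFGraph NN PN) (SN : Type) {x : NN} (hx : x ∉ G.nodes) :
    (G.natural SN).Isolated x :=
  fun _ _ => ⟨fun h => hx (mem_nodes_of_mem_facts h).1,
    fun h => hx (mem_nodes_of_mem_facts h).2⟩

theorem isolated_starI_none (G : RDFGraph NN PN) (SN : Type) (VN : Finset NN) (VP : Set PN) :
    (G.starI SN VN VP).Isolated none := by
  simp [Interp.Isolated, RDFGraph.starI]

end RDFGraph

/-- Let `Σ ⊆ N ∪ P` be a finite vocabulary (node part `VN`,
property part `VP`), `φ` a shape over `Σ`, and `G` a graph.  Then for every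
node name `x ∉ N_G ∪ (Σ ∩ N)`, we have `x ∈ ⟦φ⟧_G` iff `⋆ ∈ ⟦φ⟧_⋆`. -/
theorem statement1 [DecidableEq NN]
    (VN : Finset NN) (VP : Finset PN) (φ : Shape NN SN PN)
    (hφ : φ.over ↑VN (∅ : Set SN) ↑VP)
    (G : RDFGraph NN PN) (x : NN) (hx : x ∉ G.nodes ∪ VN) :
    x ∈ evalShape (G.natural SN) φ ↔
      (none : Option {y : NN // y ∈ G.nodes ∪ VN}) ∈
        evalShape (G.starI SN VN ↑VP) φ := by
  refine (G.isolated_natural SN fun h => hx (Finset.mem_union_left _ h)).mem_evalShape_iff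
    (G.isolated_starI_none SN VN ↑VP) ?_ ?_ (fun s hs => absurd hs (Set.notMem_empty s)) φ hφ
  · rintro c hc rfl
    exact hx (Finset.mem_union_right _ hc)
  · intro c hc
    simp only [RDFGraph.starI, dif_pos (Finset.mem_union_right _ (Finset.mem_coe.mp hc))]
    exact Option.some_ne_none _
end

section
/- Let Σ ⊆ N ∪ P be a finite vocabulary, φ a shape over Σ, and G a graph. If x and y are two node names, neither of which belongs to N_G ∪ (Σ ∩ N), then x ∈ ⟦φ⟧_G if and only if y ∈ ⟦φ⟧_G. -/
variable {NN SN PN Δ : Type}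

/-- A graph: a finite set of facts `p(a,b)`. -/
structure ShGraph (NN PN : Type) where
  facts : Finset (PN × NN × NN)

/-- `N_G`: the node names occurring in the graph `G`. -/
def ShGraph.nodes [DecidableEq NN] (G : ShGraph NN PN) : Finset NN :=
  G.facts.image (fun f => f.2.1) ∪ G.facts.image (fun f => f.2.2)

/-- The natural interpretation `I(G)` of a graph `G`: its vocabulary is all of
`N ∪ P` (no shape names), its domain is the set `N` of ALL node names, each
node name denotes itself, and each property name `p` denotes
`{(a,b) | p(a,b) ∈ G}`. -/
def ShGraph.natural (G : ShGraph NN PN) (SN : Type) : Interp NN SN PN NN where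
  sigmaN := Set.univ
  sigmaS := ∅
  sigmaP := Set.univ
  nodeI  := id
  shapeI := fun _ => ∅
  propI  := fun p => {x | (p, x.1, x.2) ∈ G.facts}

/-- The interpretation `I_⋆` determined by a graph `G` and a finite vocabulary
`Σ ⊆ N ∪ P` (with node part `VN` and property part `VP`): it is just like
`I(G)` except that its domain is `N_G ∪ (Σ ∩ N) ∪ {⋆}`, where the fresh
element `⋆` is modelled by `none`. -/
def ShGraph.starI [DecidableEq NN] (G : ShGraph NN PN) (SN : Type)
    (VN : Finset NN) (VP : Set PN) :
    Interp NN SN PN (Option {x : NN // x ∈ G.nodes ∪ VN}) where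
  sigmaN := ↑VN
  sigmaS := ∅
  sigmaP := VP
  nodeI  := fun c => if h : c ∈ G.nodes ∪ VN then some ⟨c, h⟩ else none
  shapeI := fun _ => ∅
  propI  := fun p => {x | ∃ a b, x.1 = some a ∧ x.2 = some b ∧ (p, a.1, b.1) ∈ G.facts}

/-! The swap of `x` and `y` is an automorphism of `I(G)` fixing every node name of `Σ`, and
truth of shapes over `Σ` is invariant under such automorphisms. -/

section Automorphism

variable {σ : Equiv.Perm Δ}

theorem Relation.reflTransGen_perm_iff {r : Δ → Δ → Prop} (hr : ∀ a b, r (σ a) (σ b) ↔ r a b)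
    (a b : Δ) : Relation.ReflTransGen r (σ a) (σ b) ↔ Relation.ReflTransGen r a b := by
  refine ⟨fun h => ?_, fun h => h.lift σ fun a b => (hr a b).2⟩
  simpa [Function.onFun] using h.lift σ.symm fun a b hab => (hr _ _).1 (by simpa using hab)

theorem setOf_perm_apply_mem {R : Set (Δ × Δ)} (hR : ∀ a b, (σ a, σ b) ∈ R ↔ (a, b) ∈ R)
    (a : Δ) : {b | (σ a, b) ∈ R} = σ '' {b | (a, b) ∈ R} := by
  ext b
  rw [Equiv.image_eq_preimage_symm, Set.mem_preimage, Set.mem_ofPred_eq, Set.mem_ofPred_eq,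
    ← hR a (σ.symm b), Equiv.apply_symm_apply]

structure Interp.IsAutomorphism (I : Interp NN SN PN Δ) (VN : Set NN) (VS : Set SN)
    (σ : Equiv.Perm Δ) : Prop where
  map_nodeI : ∀ c ∈ VN, σ (I.nodeI c) = I.nodeI c
  map_shapeI : ∀ s ∈ VS, ∀ a, σ a ∈ I.shapeI s ↔ a ∈ I.shapeI s
  map_propI : ∀ p a b, (σ a, σ b) ∈ I.propI p ↔ (a, b) ∈ I.propI p

namespace Interp.IsAutomorphism

variable {I : Interp NN SN PN Δ} {VN : Set NN} {VS : Set SN}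

theorem evalPath_iff (hσ : I.IsAutomorphism VN VS σ) (E : PathExpr PN) (a b : Δ) :
    (σ a, σ b) ∈ evalPath I E ↔ (a, b) ∈ evalPath I E := by
  induction E generalizing a b with
  | prop p => exact hσ.map_propI p a b
  | inv p => exact hσ.map_propI p b a
  | union E₁ E₂ ih₁ ih₂ => exact or_congr (ih₁ a b) (ih₂ a b)
  | comp E₁ E₂ ih₁ ih₂ =>
    refine ⟨fun ⟨z, h₁, h₂⟩ => ⟨σ.symm z, ?_, ?_⟩, fun ⟨z, h₁, h₂⟩ => ⟨σ z, ?_, ?_⟩⟩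
    · exact (ih₁ a _).1 (by simpa using h₁)
    · exact (ih₂ _ b).1 (by simpa using h₂)
    · exact (ih₁ a z).2 h₁
    · exact (ih₂ z b).2 h₂
  | star E ih => exact Relation.reflTransGen_perm_iff ih a b
  | opt E ih => exact or_congr (ih a b) σ.injective.eq_iff

theorem setOf_evalPath (hσ : I.IsAutomorphism VN VS σ) (E : PathExpr PN) (a : Δ) :
    {b | (σ a, b) ∈ evalPath I E} = σ '' {b | (a, b) ∈ evalPath I E} :=
  setOf_perm_apply_mem (hσ.evalPath_iff E) a

theorem apply_mem_evalShape_iff (hσ : I.IsAutomorphism VN VS σ) {VP : Set PN}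
    {φ : Shape NN SN PN} (hφ : φ.over VN VS VP) (a : Δ) :
    σ a ∈ evalShape I φ ↔ a ∈ evalShape I φ := by
  induction φ generalizing a with
  | top => exact Iff.rfl
  | sname s => exact hσ.map_shapeI s hφ a
  | single c =>
    change σ a = I.nodeI c ↔ a = I.nodeI c
    rw [← hσ.map_nodeI c hφ, σ.injective.eq_iff, hσ.map_nodeI c hφ]
  | sand φ ψ ihφ ihψ => exact and_congr (ihφ hφ.1 a) (ihψ hφ.2 a)
  | sor φ ψ ihφ ihψ => exact or_congr (ihφ hφ.1 a) (ihψ hφ.2 a)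
  | snot φ ih => exact not_congr (ih hφ a)
  | atLeast n E ψ ih =>
    have hψ : σ '' evalShape I ψ = evalShape I ψ := by
      ext b
      rw [Equiv.image_eq_preimage_symm, Set.mem_preimage, ← ih hφ.2, Equiv.apply_symm_apply]
    change _ ≤ Set.encard _ ↔ _ ≤ Set.encard _
    rw [hσ.setOf_evalPath, ← hψ, ← Set.image_inter σ.injective, σ.injective.encard_image, hψ]
  | eqS p E =>
    change {b | (σ a, b) ∈ evalPath I (.prop p)} = _ ↔ {b | (a, b) ∈ evalPath I (.prop p)} = _
    rw [hσ.setOf_evalPath, hσ.setOf_evalPath, Set.image_eq_image σ.injective]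
  | disjS p E =>
    change {b | (σ a, b) ∈ evalPath I (.prop p)} ∩ _ = ∅ ↔
      {b | (a, b) ∈ evalPath I (.prop p)} ∩ _ = ∅
    rw [hσ.setOf_evalPath, hσ.setOf_evalPath, ← Set.image_inter σ.injective, Set.image_eq_empty]
  | closed Q =>
    change (∀ p ∈ I.sigmaP, p ∉ Q → ∀ b, (σ a, b) ∉ I.propI p) ↔
      ∀ p ∈ I.sigmaP, p ∉ Q → ∀ b, (a, b) ∉ I.propI p
    refine forall₃_congr fun p _ _ => ⟨fun h b => ?_, fun h b => ?_⟩
    · rw [← hσ.map_propI]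
      exact h (σ b)
    · rw [← σ.apply_symm_apply b, hσ.map_propI]
      exact h _

end Interp.IsAutomorphism

end Automorphism

theorem ShGraph.left_mem_nodes [DecidableEq NN] {G : ShGraph NN PN} {p : PN} {a b : NN}
    (h : (p, a, b) ∈ G.facts) : a ∈ G.nodes :=
  Finset.mem_union_left _ (Finset.mem_image_of_mem _ h)

theorem ShGraph.right_mem_nodes [DecidableEq NN] {G : ShGraph NN PN} {p : PN} {a b : NN}
    (h : (p, a, b) ∈ G.facts) : b ∈ G.nodes :=
  Finset.mem_union_right _ (Finset.mem_image_of_mem (fun f => f.2.2) h)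

theorem ShGraph.isAutomorphism_natural [DecidableEq NN] (G : ShGraph NN PN) {VN : Set NN}
    {σ : Equiv.Perm NN} (hVN : ∀ c ∈ VN, σ c = c) (hG : ∀ a ∈ G.nodes, σ a = a) :
    (G.natural SN).IsAutomorphism VN ∅ σ where
  map_nodeI := hVN
  map_shapeI s hs := absurd hs (Set.notMem_empty s)
  map_propI p a b := by
    refine ⟨fun h => ?_, fun h => ?_⟩
    · change (p, σ a, σ b) ∈ G.facts at h
      have ha := hG _ (ShGraph.left_mem_nodes h)
      have hb := hG _ (ShGraph.right_mem_nodes h)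
      rwa [σ.injective ha, σ.injective hb] at h
    · change (p, a, b) ∈ G.facts at h
      have ha := hG _ (ShGraph.left_mem_nodes h)
      have hb := hG _ (ShGraph.right_mem_nodes h)
      change (p, σ a, σ b) ∈ G.facts
      rwa [ha, hb]

/-- Let `Σ ⊆ N ∪ P` be a finite vocabulary (node part `VN`,
property part `VP`), `φ` a shape over `Σ`, and `G` a graph.  If `x` and `y`
are two node names, neither of which belongs to `N_G ∪ (Σ ∩ N)`, then
`x ∈ ⟦φ⟧_G` iff `y ∈ ⟦φ⟧_G`. -/
theorem statement3 [DecidableEq NN]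
    (VN : Finset NN) (VP : Finset PN) (φ : Shape NN SN PN)
    (hφ : φ.over ↑VN (∅ : Set SN) ↑VP)
    (G : ShGraph NN PN) (x y : NN)
    (hx : x ∉ G.nodes ∪ VN) (hy : y ∉ G.nodes ∪ VN) :
    x ∈ evalShape (G.natural SN) φ ↔ y ∈ evalShape (G.natural SN) φ := by
  have hswap : ∀ c ∈ G.nodes ∪ VN, Equiv.swap x y c = c := fun c hc =>
    Equiv.swap_apply_of_ne_of_ne (ne_of_mem_of_not_mem hc hx) (ne_of_mem_of_not_mem hc hy)
  have hσ : (G.natural SN).IsAutomorphism (↑VN) ∅ (Equiv.swap x y) :=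
    G.isAutomorphism_natural (fun c hc => hswap c (Finset.mem_union_right _ hc))
      (fun a ha => hswap a (Finset.mem_union_left _ ha))
  rw [← hσ.apply_mem_evalShape_iff hφ x, Equiv.swap_apply_left]
end
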